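/- For every decreasing sequence α and l ≥ 0, x belongs to ⋃_{i=0}^{l} X^k_{α·(i)} if and only if x = (min ⋃_{i=0}^{l} X^k_{α·(i)} + j·2^{k−l}) mod 2^k for some integer j. -/

import Mathlib

/-- The `k`-bit reversal permutation of `{0,…,2^k−1}`. -/
def revBits (k x : ℕ) : ℕ := ∑ i ∈ Finset.range k, 2 ^ i * (x / 2 ^ (k - 1 - i) % 2)

/-- The sets of time slots `Y^k_α`.  A (decreasing) sequence `α = (l_0,…,l_r)` of the paper
is represented here as the list `[l_r, …, l_0]`, with the most recently appended level first:
`Y^k_{()} = {0,…,2^k−1}` and `Y^k_{α·(l)} = {y ∈ Y^k_α : ⌈log₂(y − min Y^k_α + 1)⌉ = l}`. -/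
noncomputable def Y (k : ℕ) : List ℕ → Finset ℕ
  | [] => Finset.range (2 ^ k)
  | l :: α => (Y k α).filter (fun y => Nat.clog 2 (y - sInf {z : ℕ | z ∈ Y k α} + 1) = l)

/-- Validity of the (reversed) sequence: the paper's `α` is strictly decreasing with
entries in `{0,…,k}`, i.e. the reversed list is strictly increasing with entries `≤ k`. -/
def ValidSeq (k : ℕ) (α : List ℕ) : Prop :=
  List.Pairwise (· < ·) α ∧ ∀ l ∈ α, l ≤ k

/-- The ranks `X^k_α = revBits_k(Y^k_α)`. -/
noncomputable def X (k : ℕ) (α : List ℕ) : Finset ℕ := (Y k α).image (revBits k)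

/-- `step^k_{()} = 1` and `step^k_{α·(l)} = 2^{k−l+1}`. -/
def stepA (k : ℕ) : List ℕ → ℕ
  | [] => 1
  | l :: _ => 2 ^ (k - l + 1)

/-!
Each `Y^k_α` is an aligned dyadic block `[m, m + 2^e)` with `2^e ∣ m`, and the levels
`i = 0, …, l` of `α·(i)` tile its initial segment `[m, m + 2^l)`, where `2^l ∣ m`. Writing
`m = 2^l n`, bit reversal sends `m + s` (`s < 2^l`) to `revBits_{k-l}(n) + 2^{k-l} revBits_l(s)`,
and `revBits_l` permutes `[0, 2^l)`. Hence the union of the `X^k_{α·(i)}` is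
`{r + t 2^{k-l} : t < 2^l}` with `r < 2^{k-l}`, which is the progression `r + j 2^{k-l}` mod `2^k`.
-/

open Finset

lemma revBits_zero (x : ℕ) : revBits 0 x = 0 := by
  simp [revBits]

lemma revBits_succ (k x : ℕ) : revBits (k + 1) x = revBits k (x / 2) + 2 ^ k * (x % 2) := by
  rw [revBits, revBits, sum_range_succ, show k + 1 - 1 - k = 0 by omega, pow_zero, Nat.div_one]
  congr 1
  refine sum_congr rfl fun i hi => ?_
  rw [show k + 1 - 1 - i = k - 1 - i + 1 by grind, pow_succ', ← Nat.div_div_eq_div_mul]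

lemma revBits_lt (k x : ℕ) : revBits k x < 2 ^ k := by
  induction k generalizing x with
  | zero => simp [revBits_zero]
  | succ k ih =>
    have := ih (x / 2)
    have : x % 2 ≤ 1 := Nat.le_of_lt_succ (Nat.mod_lt x two_pos)
    rw [revBits_succ, pow_succ]
    nlinarith

lemma revBits_two_pow_mul_add {k l n s : ℕ} (hs : s < 2 ^ l) (hl : l ≤ k) :
    revBits k (2 ^ l * n + s) = revBits (k - l) n + 2 ^ (k - l) * revBits l s := by
  induction l generalizing k s with
  | zero => simp [Nat.lt_one_iff.mp hs, revBits_zero]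
  | succ l ih =>
    obtain ⟨k, rfl⟩ := Nat.exists_eq_add_of_le' (Nat.succ_pos _ |>.trans_le hl)
    have hsplit : 2 ^ (l + 1) * n + s = 2 * (2 ^ l * n) + s := by ring
    have hdiv : (2 ^ (l + 1) * n + s) / 2 = 2 ^ l * n + s / 2 := by omega
    have hmod : (2 ^ (l + 1) * n + s) % 2 = s % 2 := by omega
    have hk : 2 ^ k = 2 ^ (k - l) * 2 ^ l := by rw [← pow_add]; congr 1; omega
    rw [revBits_succ, hdiv, hmod, ih (by rw [pow_succ] at hs; omega) (by omega), revBits_succ,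
      show k + 1 - (l + 1) = k - l by omega, hk]
    ring

lemma image_revBits_range (k : ℕ) : (range (2 ^ k)).image (revBits k) = range (2 ^ k) := by
  refine Subset.antisymm (fun y hy => ?_) (fun y hy => ?_)
  · obtain ⟨x, -, rfl⟩ := mem_image.mp hy
    exact mem_range.mpr (revBits_lt k x)
  induction k generalizing y with
  | zero => simp_all [revBits_zero]
  | succ k ih =>
    obtain ⟨x, hx, hxy⟩ :=
      mem_image.mp (ih (y % 2 ^ k) (mem_range.mpr (Nat.mod_lt _ (by positivity))))
    rw [mem_range] at hx hy
    have hq : y / 2 ^ k < 2 := Nat.div_lt_of_lt_mul (by rwa [← pow_succ])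
    have hdecomp := Nat.mod_add_div y (2 ^ k)
    generalize y / 2 ^ k = q at hq hdecomp
    refine mem_image.mpr ⟨2 * x + q, mem_range.mpr (by rw [pow_succ]; omega), ?_⟩
    rw [revBits_succ, show (2 * x + q) / 2 = x by omega, show (2 * x + q) % 2 = q by omega, hxy,
      hdecomp]

lemma mem_image_range_iff_exists_mod {r d n x : ℕ} (hr : r < d) (hn : 0 < n) :
    x ∈ (range n).image (fun t => r + t * d) ↔ ∃ j : ℕ, x = (r + j * d) % (d * n) := by
  have hdiv : ∀ j, (r + j * d) / d = j := fun j => by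
    rw [Nat.add_mul_div_right _ _ (by omega), Nat.div_eq_of_lt hr, zero_add]
  have hmod : ∀ j, (r + j * d) % (d * n) = r + j % n * d := fun j => by
    rw [Nat.mod_mul, Nat.add_mul_mod_self_right, Nat.mod_eq_of_lt hr, hdiv, mul_comm d]
  simp only [mem_image, mem_range, hmod]
  constructor
  · rintro ⟨t, ht, rfl⟩
    exact ⟨t, by rw [Nat.mod_eq_of_lt ht]⟩
  · rintro ⟨j, rfl⟩
    exact ⟨j % n, Nat.mod_lt j hn, rfl⟩

lemma sInf_image_range {r d n : ℕ} (hn : 0 < n) :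
    sInf {z : ℕ | z ∈ (range n).image (fun t => r + t * d)} = r := by
  refine IsLeast.csInf_eq ⟨mem_image.mpr ⟨0, mem_range.mpr hn, by simp⟩, ?_⟩
  intro z hz
  rw [Set.mem_ofPred_eq, mem_image] at hz
  obtain ⟨t, -, rfl⟩ := hz
  exact Nat.le_add_right r _

lemma clog_two_eq_iff {n i : ℕ} (hn : 1 ≤ n) :
    Nat.clog 2 n = i ↔ 2 ^ i / 2 < n ∧ n ≤ 2 ^ i := by
  rw [le_antisymm_iff, Nat.clog_le_iff_le_pow one_lt_two, and_comm]
  cases i with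
  | zero => simp only [zero_le, true_and, pow_zero]; omega
  | succ i =>
    rw [Nat.succ_le_iff, Nat.lt_clog_iff_pow_lt one_lt_two, pow_succ, Nat.mul_div_cancel _ two_pos]

/-- `Y^k_α` is a block of length `2^e` aligned at a multiple of `2^e`, for `e = blockExp k α`
(`0 - 1 = 0` fits the singleton `Y^k_{β·(0)}`). -/
def blockExp (k : ℕ) : List ℕ → ℕ
  | [] => k
  | l :: _ => l - 1

lemma ValidSeq.of_cons {k l : ℕ} {α : List ℕ} (h : ValidSeq k (l :: α)) : ValidSeq k α :=
  ⟨h.1.of_cons, fun x hx => h.2 x (List.mem_cons_of_mem _ hx)⟩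

lemma ValidSeq.le_blockExp {k l : ℕ} {α : List ℕ} (h : ValidSeq k (l :: α)) :
    l ≤ blockExp k α := by
  cases α with
  | nil => exact h.2 l List.mem_cons_self
  | cons l' α =>
    have := (List.pairwise_cons.mp h.1).1 l' List.mem_cons_self
    simp only [blockExp]
    omega

/-- The left end `m + 2^i / 2` is `m + 2^(i-1)` for `i ≥ 1` and `m` for `i = 0`. -/
lemma Y_cons_eq_Ico {k e m i : ℕ} {α : List ℕ} (hY : Y k α = Ico m (m + 2 ^ e))
    (hi : i ≤ e) :
    Y k (i :: α) = Ico (m + 2 ^ i / 2) (m + 2 ^ i) := by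
  have hmin : sInf {z : ℕ | z ∈ Y k α} = m := by
    rw [hY]
    change sInf (↑(Ico m (m + 2 ^ e)) : Set ℕ) = m
    rw [coe_Ico, csInf_Ico (by simp)]
  have : 2 ^ i ≤ 2 ^ e := Nat.pow_le_pow_right two_pos hi
  ext y
  rw [Y, hmin, hY, mem_filter, mem_Ico, mem_Ico]
  rcases lt_or_ge y m with hy | hy
  · omega
  · rw [clog_two_eq_iff (by omega)]
    omega

lemma Y_eq_Ico (k : ℕ) :
    ∀ α : List ℕ, ValidSeq k α →
      ∃ m, 2 ^ blockExp k α ∣ m ∧ Y k α = Ico m (m + 2 ^ blockExp k α)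
  | [], _ => ⟨0, dvd_zero _, by rw [Y, blockExp, zero_add, range_eq_Ico]⟩
  | i :: α, h => by
    obtain ⟨m, hdvd, hY⟩ := Y_eq_Ico k α h.of_cons
    have hi := h.le_blockExp
    refine ⟨m + 2 ^ i / 2, ?_, ?_⟩
    · cases i with
      | zero => simp [blockExp]
      | succ i =>
        rw [blockExp, pow_succ, Nat.mul_div_cancel _ two_pos, Nat.add_sub_cancel]
        exact dvd_add ((pow_dvd_pow 2 (by omega)).trans hdvd) dvd_rfl
    · rw [Y_cons_eq_Ico hY hi]
      cases i with
      | zero => rfl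
      | succ i =>
        rw [blockExp, Nat.add_sub_cancel, pow_succ, Nat.mul_div_cancel _ two_pos, add_assoc,
          ← mul_two]

lemma biUnion_range_Ico_half_pow (m l : ℕ) :
    (range (l + 1)).biUnion (fun i => Ico (m + 2 ^ i / 2) (m + 2 ^ i)) = Ico m (m + 2 ^ l) := by
  induction l with
  | zero => simp
  | succ l ih =>
    rw [range_add_one, biUnion_insert, ih, union_comm, pow_succ, Nat.mul_div_cancel _ two_pos]
    exact Ico_union_Ico_eq_Ico (Nat.le_add_right _ _)
      (by rw [mul_two, ← add_assoc]; exact Nat.le_add_right _ _)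

lemma biUnion_Y_cons {k e m l : ℕ} {α : List ℕ} (hY : Y k α = Ico m (m + 2 ^ e))
    (hl : l ≤ e) : (range (l + 1)).biUnion (fun i => Y k (i :: α)) = Ico m (m + 2 ^ l) := by
  rw [← biUnion_range_Ico_half_pow]
  exact biUnion_congr rfl fun i hi =>
    Y_cons_eq_Ico hY ((Nat.lt_succ_iff.mp (mem_range.mp hi)).trans hl)

lemma biUnion_X_cons {k l : ℕ} {α : List ℕ} (h : ValidSeq k (l :: α)) :
    ∃ r < 2 ^ (k - l), (range (l + 1)).biUnion (fun i => X k (i :: α)) =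
      (range (2 ^ l)).image (fun t => r + t * 2 ^ (k - l)) := by
  obtain ⟨m, hdvd, hY⟩ := Y_eq_Ico k α h.of_cons
  obtain ⟨n, rfl⟩ := (pow_dvd_pow 2 h.le_blockExp).trans hdvd
  have hlk : l ≤ k := h.2 l List.mem_cons_self
  refine ⟨revBits (k - l) n, revBits_lt _ _, ?_⟩
  have hYunion : (range (l + 1)).biUnion (fun i => Y k (i :: α)) =
      (range (2 ^ l)).image (2 ^ l * n + ·) := by
    rw [range_eq_Ico (2 ^ l), image_add_left_Ico, add_zero, biUnion_Y_cons hY h.le_blockExp]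
  calc (range (l + 1)).biUnion (fun i => X k (i :: α))
      = ((range (2 ^ l)).image (revBits l)).image
          (fun t => revBits (k - l) n + t * 2 ^ (k - l)) := by
        simp only [X, ← biUnion_image, hYunion, image_image]
        exact image_congr fun s hs => by
          rw [Function.comp_apply, Function.comp_apply,
            revBits_two_pow_mul_add (mem_range.mp hs) hlk, mul_comm]
    _ = _ := by rw [image_revBits_range]

/-- `⋃_{i=0}^{l} X^k_{α·(i)}` is an arithmetic progression mod `2^k` with difference `2^{k−l}`. -/
theorem X_union_arith_progression (k : ℕ) (α : List ℕ) (l : ℕ) (h : ValidSeq k (l :: α))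
    (x : ℕ) :
    x ∈ (Finset.range (l + 1)).biUnion (fun i => X k (i :: α)) ↔
      ∃ j : ℕ, x = (sInf {z : ℕ | z ∈ (Finset.range (l + 1)).biUnion (fun i => X k (i :: α))}
        + j * 2 ^ (k - l)) % 2 ^ k := by
  obtain ⟨r, hr, hU⟩ := biUnion_X_cons h
  have hk : 2 ^ k = 2 ^ (k - l) * 2 ^ l := by
    rw [← pow_add, Nat.sub_add_cancel (h.2 l List.mem_cons_self)]
  rw [hU, sInf_image_range (by positivity), hk]
  exact mem_image_range_iff_exists_mod hr (by positivity)
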